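/- arXiv:2101.11136 — 4 statements merged into one kernel-verified Lean document; each statement's English description precedes it below -/
import Mathlib

section
/- Let k ≥ 2 and 0 ≤ r ≤ k-2 be integers. Then for every integer d with 1 ≤ d ≤ k, p(d, r) ≤ p(⌊(k+1)/(k-r)⌋, r); that is, the revealing probability d ↦ p(d, r) over d ∈ {1, …, k} is maximized at d = ⌊(k+1)/(k-r)⌋. Moreover, for r = k-1 the maximum is attained at d = k, where p(k, k-1) = 1. -/
/-!
The recurrences `C(r, d) · d = C(r, d-1) · (r+1-d)` and `C(k, d+1) · (d+1) = C(k, d) · (k-d)` give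
`p(d+1, r) · d (k-d) = p(d, r) · (r+1-d)(d+1)`, and `d (k-d) - (r+1-d)(d+1) = d (k-r) - (r+1)`.
Hence `d ↦ p(d, r)` increases as long as `d (k-r) ≤ r+1`, that is `d < ⌊(k+1)/(k-r)⌋`,
and decreases from there on.
-/

/-- The revealing probability of an encoding symbol of degree `d` when `r` of the `k`
message symbols are known: `p(d, r) = (k - r) · C(r, d-1) / C(k, d)`. -/
def revealProb (k d r : ℕ) : ℚ :=
  ((k : ℚ) - r) * (r.choose (d - 1)) / (k.choose d)

/-- The optimal degree `⌊(k+1)/(k-r)⌋` (floor of the rational division). -/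
def optDeg (k r : ℕ) : ℕ :=
  ⌊((k : ℚ) + 1) / ((k : ℚ) - r)⌋₊

variable {k r d : ℕ}

theorem optDeg_eq (hr : r ≤ k) : optDeg k r = (k + 1) / (k - r) := by
  rw [optDeg, ← Nat.floor_div_eq_div (K := ℚ)]
  push_cast [hr]
  rfl

theorem lt_optDeg_iff (hr : r < k) : d < optDeg k r ↔ d * (k - r) ≤ r + 1 := by
  have hkr : 0 < k - r := Nat.sub_pos_of_lt hr
  rw [optDeg_eq hr.le, show k + 1 = r + 1 + (k - r) by omega, Nat.add_div_right _ hkr,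
    Nat.lt_add_one_iff, Nat.le_div_iff_mul_le hkr]

theorem one_le_optDeg (hr : r < k) : 1 ≤ optDeg k r :=
  (lt_optDeg_iff hr).2 (by simp)

theorem optDeg_le (hr : r + 2 ≤ k) : optDeg k r ≤ k := by
  refine not_lt.1 fun h => ?_
  have := (lt_optDeg_iff (by omega)).1 h
  nlinarith [Nat.le_sub_of_add_le' hr]

theorem optDeg_pred_self (hk : 1 ≤ k) : optDeg k (k - 1) = k + 1 := by
  rw [optDeg_eq (Nat.sub_le k 1), Nat.sub_sub_self hk, Nat.div_one]

theorem revealProb_nonneg (hr : r ≤ k) : 0 ≤ revealProb k d r := by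
  have : (0 : ℚ) ≤ k - r := sub_nonneg.2 (by exact_mod_cast hr)
  unfold revealProb
  positivity

-- The truncated `r + 1 - d` vanishes exactly when `C(r, d)` does, so no case split on `d ≤ r` is needed.
theorem revealProb_succ_mul (hd : 1 ≤ d) (hdk : d < k) :
    revealProb k (d + 1) r * ↑(d * (k - d)) = revealProb k d r * ↑((r + 1 - d) * (d + 1)) := by
  obtain ⟨e, rfl⟩ : ∃ e, d = e + 1 := ⟨d - 1, by omega⟩
  have hr : (r.choose (e + 1) : ℚ) * (e + 1) = r.choose e * ↑(r - e) := by
    exact_mod_cast Nat.choose_succ_right_eq r e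
  have hk : (k.choose (e + 1 + 1) : ℚ) * (e + 1 + 1) = k.choose (e + 1) * ↑(k - (e + 1)) := by
    exact_mod_cast Nat.choose_succ_right_eq k (e + 1)
  have hk₁ : (k.choose (e + 1) : ℚ) ≠ 0 := by exact_mod_cast (Nat.choose_pos hdk.le).ne'
  have hk₂ : (k.choose (e + 1 + 1) : ℚ) ≠ 0 := by exact_mod_cast (Nat.choose_pos hdk).ne'
  simp only [revealProb, Nat.add_sub_cancel, show r + 1 - (e + 1) = r - e by omega]
  field_simp
  push_cast
  linear_combination ((k : ℚ) - r) * ↑(k - (e + 1)) * ↑(k.choose (e + 1)) * hr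
    - ((k : ℚ) - r) * ↑(r.choose e) * ↑(r - e) * hk

theorem revealProb_le_succ (hr : r < k) (hd : 1 ≤ d) (hdk : d < k) (h : d < optDeg k r) :
    revealProb k d r ≤ revealProb k (d + 1) r := by
  have hpos : (0 : ℚ) < ↑(d * (k - d)) := by exact_mod_cast Nat.mul_pos hd (Nat.sub_pos_of_lt hdk)
  have hmul : d * (k - d) ≤ (r + 1 - d) * (d + 1) := by
    have hdkr := (lt_optDeg_iff hr).1 h
    have hdr : d ≤ r + 1 := (Nat.le_mul_of_pos_right d (Nat.sub_pos_of_lt hr)).trans hdkr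
    zify [hdr, hr.le, hdk.le] at hdkr ⊢
    linarith
  refine le_of_mul_le_mul_right ?_ hpos
  rw [revealProb_succ_mul hd hdk]
  exact mul_le_mul_of_nonneg_left (by exact_mod_cast hmul) (revealProb_nonneg hr.le)

theorem revealProb_succ_le (hr : r < k) (hd : 1 ≤ d) (hdk : d < k) (h : optDeg k r ≤ d) :
    revealProb k (d + 1) r ≤ revealProb k d r := by
  have hpos : (0 : ℚ) < ↑(d * (k - d)) := by exact_mod_cast Nat.mul_pos hd (Nat.sub_pos_of_lt hdk)
  have hmul : (r + 1 - d) * (d + 1) ≤ d * (k - d) := by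
    have hdkr : r + 1 < d * (k - r) := not_le.1 fun h' => (lt_optDeg_iff hr).2 h' |>.not_ge h
    rcases le_total d (r + 1) with hdr | hdr
    · zify [hdr, hr.le, hdk.le] at hdkr ⊢
      linarith
    · simp [Nat.sub_eq_zero_of_le hdr]
  refine le_of_mul_le_mul_right ?_ hpos
  rw [revealProb_succ_mul hd hdk]
  exact mul_le_mul_of_nonneg_left (by exact_mod_cast hmul) (revealProb_nonneg hr.le)

theorem revealProb_monotoneOn (hr : r < k) :
    MonotoneOn (revealProb k · r) (Set.Icc 1 (min (optDeg k r) k)) :=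
  monotoneOn_of_le_add_one Set.ordConnected_Icc fun _ _ hd hd₁ =>
    have ⟨hdD, hdk⟩ := lt_min_iff.1 (Nat.add_one_le_iff.1 hd₁.2)
    revealProb_le_succ hr hd.1 hdk hdD

theorem revealProb_antitoneOn (hr : r < k) :
    AntitoneOn (revealProb k · r) (Set.Icc (optDeg k r) k) :=
  antitoneOn_of_add_one_le Set.ordConnected_Icc fun _ _ hd hd₁ =>
    revealProb_succ_le hr ((one_le_optDeg hr).trans hd.1) (Nat.add_one_le_iff.1 hd₁.2) hd.1

theorem revealProb_self_pred (hk : 1 ≤ k) : revealProb k k (k - 1) = 1 := by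
  simp [revealProb, Nat.cast_sub hk]

/-- For `k ≥ 2` and `0 ≤ r ≤ k-2`, the revealing probability `d ↦ p(d, r)` over
`d ∈ {1, …, k}` is maximized at `d = ⌊(k+1)/(k-r)⌋`.  Moreover, for `r = k-1` the
maximum is attained at `d = k`, where `p(k, k-1) = 1`. -/
theorem optimal_degree_maximizes_revealing_probability (k : ℕ) (hk : 2 ≤ k) :
    (∀ r : ℕ, r ≤ k - 2 → ∀ d : ℕ, 1 ≤ d → d ≤ k →
      revealProb k d r ≤ revealProb k (optDeg k r) r) ∧
    (∀ d : ℕ, 1 ≤ d → d ≤ k → revealProb k d (k - 1) ≤ revealProb k k (k - 1)) ∧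
    revealProb k k (k - 1) = 1 := by
  refine ⟨fun r hr d hd hdk => ?_, fun d hd hdk => ?_, revealProb_self_pred (by omega)⟩
  · have hrk : r < k := by omega
    have hD₁ := one_le_optDeg hrk
    have hDk := optDeg_le (show r + 2 ≤ k by omega)
    rcases le_total d (optDeg k r) with hdD | hDd
    · exact revealProb_monotoneOn hrk ⟨hd, le_min hdD hdk⟩ ⟨hD₁, le_min le_rfl hDk⟩ hdD
    · exact revealProb_antitoneOn hrk ⟨le_rfl, hDk⟩ ⟨hDd, hdk⟩ hDd
  · have hkD : k ≤ optDeg k (k - 1) := by rw [optDeg_pred_self (by omega)]; omega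
    exact revealProb_monotoneOn (by omega) ⟨hd, le_min (hdk.trans hkD) hdk⟩
      ⟨by omega, le_min hkD le_rfl⟩ hdk
end

section
/- Let γ be a real number with 0 < γ < 1 and let k ≥ 1 be an integer. Then the number of distinct values taken by the function r ↦ ⌊(k+1)/(k-r)⌋ as r ranges over the integers {0, 1, …, ⌊(1-γ)k⌋} is at most 2/γ. Consequently, in the (1-γ)-truncated real-time oblivious protocol the receiver needs to send at most 2/γ feedback messages, since a feedback message is sent only when this value changes. -/
/-!
Since `r ≤ (1 - γ) k`, the denominator `k - r` is at least `γ k`, so every ratio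
`(k + 1) / (k - r)` lies in `[1, (k + 1) / (γ k)] ⊆ [1, 2 / γ]`. Its floor is therefore one of
the `⌊2 / γ⌋` integers in `[1, ⌊2 / γ⌋]`.
-/

theorem Int.card_Icc_one_floor_le {x : ℝ} (hx : 0 ≤ x) :
    ((Finset.Icc (1 : ℤ) ⌊x⌋).card : ℝ) ≤ x := by
  rw [Int.card_Icc, add_sub_cancel_right, Int.floor_toNat]
  exact Nat.floor_le hx

theorem Finset.card_image_floor_le {α : Type*} (s : Finset α) (f : α → ℝ) {x : ℝ} (hx : 0 ≤ x)
    (hf : ∀ a ∈ s, f a ∈ Set.Icc 1 x) :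
    ((s.image fun a => ⌊f a⌋).card : ℝ) ≤ x := by
  have hsub : s.image (fun a => ⌊f a⌋) ⊆ Finset.Icc 1 ⌊x⌋ := by
    refine Finset.image_subset_iff.mpr fun a ha => Finset.mem_Icc.mpr ⟨?_, ?_⟩
    · exact Int.le_floor.mpr (by exact_mod_cast (hf a ha).1)
    · exact Int.floor_le_floor (hf a ha).2
  exact le_trans (by exact_mod_cast Finset.card_le_card hsub) (Int.card_Icc_one_floor_le hx)

theorem add_one_div_sub_mem_Icc {γ k r : ℝ} (hγ0 : 0 < γ) (hk : 1 ≤ k) (hr0 : 0 ≤ r)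
    (hr : r ≤ (1 - γ) * k) :
    (k + 1) / (k - r) ∈ Set.Icc 1 (2 / γ) := by
  have hgap : γ * k ≤ k - r := by linarith
  have hpos : 0 < k - r := lt_of_lt_of_le (by positivity) hgap
  constructor
  · rw [le_div_iff₀ hpos]
    linarith
  · rw [div_le_div_iff₀ hpos hγ0]
    nlinarith

/-- For `0 < γ < 1` and `k ≥ 1`, the number of distinct values taken by
`r ↦ ⌊(k+1)/(k-r)⌋` as `r` ranges over `{0, 1, …, ⌊(1-γ)k⌋}` is at most `2/γ`.
Consequently, in the `(1-γ)`-truncated real-time oblivious protocol the receiver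
sends at most `2/γ` feedback messages. -/
theorem number_of_feedback_messages_le_two_div_gamma
    (γ : ℝ) (hγ0 : 0 < γ) (hγ1 : γ < 1) (k : ℕ) (hk : 1 ≤ k) :
    (((Finset.range (⌊(1 - γ) * k⌋₊ + 1)).image
        (fun r : ℕ => ⌊((k : ℝ) + 1) / ((k : ℝ) - r)⌋)).card : ℝ) ≤ 2 / γ := by
  refine Finset.card_image_floor_le _ _ (by positivity) fun r hr => ?_
  have hr_le : r ≤ ⌊(1 - γ) * k⌋₊ := Nat.lt_succ_iff.mp (Finset.mem_range.mp hr)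
  have hr : (r : ℝ) ≤ (1 - γ) * k :=
    (Nat.le_floor_iff (by have := sub_pos.mpr hγ1; positivity)).mp hr_le
  exact add_one_div_sub_mem_Icc hγ0 (by exact_mod_cast hk) r.cast_nonneg hr
end

section
/- Let γ be a real number with 0 < γ < 1 and let k be a positive integer with γ·k ≥ 1. Then the sum over integers r from 0 to ⌊(1-γ)k⌋ of ⌊(k+1)/(k-r)⌋ satisfies ∑_{r=0}^{⌊(1-γ)k⌋} ⌊(k+1)/(k-r)⌋ ≤ (k+1)·(log(1/γ) + 1), where log denotes the natural logarithm. -/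
/-!
Bounding each floor by its argument turns the sum into `(k+1)` times the harmonic tail
`∑_{r ≤ m} 1/(k - r)`, `m = ⌊(1-γ)k⌋`. Comparing `1/y` with `log y - log (y - 1)` telescopes this
tail to at most `1/(k - m) + log (k/(k - m))`, and `k - m ≥ γk ≥ 1` bounds the two terms by
`1` and `log (1/γ)`.
-/

open Finset Real

lemma one_div_le_log_sub_log_sub_one {y : ℝ} (hy : 1 < y) :
    1 / y ≤ log y - log (y - 1) := by
  have hy0 : 0 < y := zero_lt_one.trans hy
  have hy1 : 0 < y - 1 := sub_pos.mpr hy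
  have key := one_sub_inv_le_log_of_pos (div_pos hy0 hy1)
  rwa [log_div hy0.ne' hy1.ne', inv_div, one_sub_div hy0.ne', sub_sub_cancel] at key

lemma sum_range_one_div_sub_le (x : ℝ) {m : ℕ} (hm : (m : ℝ) < x) :
    ∑ r ∈ range (m + 1), 1 / (x - r) ≤ 1 / (x - m) + (log x - log (x - m)) := by
  induction m with
  | zero => simp
  | succ m ih =>
    rw [sum_range_succ]
    push_cast at hm ⊢
    have step := one_div_le_log_sub_log_sub_one (y := x - m) (by linarith)
    rw [sub_sub] at step
    linarith [ih (by linarith)]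

lemma sum_floor_div_le_mul_sum_one_div {ι : Type*} (s : Finset ι) (a : ℝ) (f : ι → ℝ) :
    ∑ i ∈ s, ((⌊a / f i⌋ : ℤ) : ℝ) ≤ a * ∑ i ∈ s, 1 / f i := by
  rw [mul_sum]
  gcongr with i
  rw [mul_one_div]
  exact Int.floor_le _

theorem sum_optimal_degrees_le_general
    (γ : ℝ) (hγ1 : γ < 1) (k : ℕ) (hγk : 1 ≤ γ * k) :
    ∑ r ∈ Finset.range (⌊(1 - γ) * k⌋₊ + 1),
        ((⌊((k : ℝ) + 1) / ((k : ℝ) - r)⌋ : ℤ) : ℝ)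
      ≤ ((k : ℝ) + 1) * (Real.log (1 / γ) + 1) := by
  set m := ⌊(1 - γ) * k⌋₊
  have hγ : 0 < γ := pos_of_mul_pos_left (zero_lt_one.trans_le hγk) k.cast_nonneg
  have hk : (0 : ℝ) < k := pos_of_mul_pos_right (zero_lt_one.trans_le hγk) hγ.le
  have hm : (m : ℝ) ≤ (1 - γ) * k := Nat.floor_le (mul_nonneg (by linarith) k.cast_nonneg)
  have hgap : γ * k ≤ k - m := by linarith
  have hinv : 1 / ((k : ℝ) - m) ≤ 1 := (div_le_one (by linarith)).mpr (by linarith)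
  have hlog : log k - log (k - m) ≤ log (1 / γ) := by
    rw [← log_div hk.ne' (by linarith)]
    refine log_le_log (by apply div_pos <;> linarith) ?_
    rw [div_le_div_iff₀ (by linarith) hγ]
    linarith
  calc _ ≤ ((k : ℝ) + 1) * ∑ r ∈ range (m + 1), 1 / ((k : ℝ) - r) :=
        sum_floor_div_le_mul_sum_one_div _ _ _
    _ ≤ ((k : ℝ) + 1) * (log (1 / γ) + 1) := by
        gcongr
        linarith [sum_range_one_div_sub_le (k : ℝ) (m := m) (by linarith)]

/-- For `0 < γ < 1`, `k ≥ 1` and `γ·k ≥ 1`, the sum of the optimal encoding degrees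
satisfies `∑_{r=0}^{⌊(1-γ)k⌋} ⌊(k+1)/(k-r)⌋ ≤ (k+1)·(log(1/γ) + 1)`. -/
theorem sum_optimal_degrees_le
    (γ : ℝ) (hγ0 : 0 < γ) (hγ1 : γ < 1) (k : ℕ) (hk : 1 ≤ k) (hγk : 1 ≤ γ * k) :
    ∑ r ∈ Finset.range (⌊(1 - γ) * k⌋₊ + 1),
        ((⌊((k : ℝ) + 1) / ((k : ℝ) - r)⌋ : ℤ) : ℝ)
      ≤ ((k : ℝ) + 1) * (Real.log (1 / γ) + 1) :=
  sum_optimal_degrees_le_general γ hγ1 k hγk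
end

section
/- Let k ≥ 2 and 0 ≤ r ≤ k-2 be integers, and let d(r) = ⌊(k+1)/(k-r)⌋. Then the revealing probability at the optimal degree satisfies p(d(r), r) ≥ (k-r)/k; equivalently, (k-r)·C(r, d(r)-1)/C(k, d(r)) ≥ (k-r)/k. -/
/-- The comparison `p(d+1, r) ≤ p(d+2, r)` with denominators cleared. -/
lemma choose_mul_choose_add_two_le {k r d : ℕ} (hdr : d < r) (hrk : r ≤ k)
    (h : (d + 1) * (k - r) ≤ r + 1) :
    r.choose d * k.choose (d + 2) ≤ r.choose (d + 1) * k.choose (d + 1) := by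
  have key : (k - (d + 1)) * (d + 1) ≤ (r - d) * (d + 2) := by
    zify [hdr.le, hrk, (by omega : d + 1 ≤ k)] at *
    nlinarith
  have hr := Nat.choose_succ_right_eq r d
  have hk := Nat.choose_succ_right_eq k (d + 1)
  refine Nat.le_of_mul_le_mul_right ?_ (by positivity : 0 < (d + 1) * (d + 2))
  calc r.choose d * k.choose (d + 2) * ((d + 1) * (d + 2))
      = r.choose d * (d + 1) * (k.choose (d + 1 + 1) * (d + 1 + 1)) := by ring
    _ = r.choose d * k.choose (d + 1) * ((k - (d + 1)) * (d + 1)) := by rw [hk]; ring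
    _ ≤ r.choose d * k.choose (d + 1) * ((r - d) * (d + 2)) := Nat.mul_le_mul_left _ key
    _ = k.choose (d + 1) * (d + 2) * (r.choose d * (r - d)) := by ring
    _ = r.choose (d + 1) * k.choose (d + 1) * ((d + 1) * (d + 2)) := by rw [← hr]; ring

lemma revealProb_one (k r : ℕ) : revealProb k 1 r = ((k : ℚ) - r) / k := by
  simp [revealProb]

lemma revealProb_le_revealProb_succ {k r d : ℕ} (hd : 1 ≤ d) (hrk : r + 2 ≤ k)
    (h : (d + 1) * (k - r) ≤ k + 1) :
    revealProb k d r ≤ revealProb k (d + 1) r := by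
  obtain ⟨e, rfl⟩ : ∃ e, d = e + 1 := ⟨d - 1, by omega⟩
  have hstep : (e + 1) * (k - r) ≤ r + 1 := by
    rw [Nat.succ_mul] at h
    omega
  have her : e < r := by
    have := Nat.mul_le_mul_left (e + 1) (by omega : 2 ≤ k - r)
    omega
  have hcross := choose_mul_choose_add_two_le her (by omega) hstep
  have hpos : ∀ j ≤ k, (0 : ℚ) < k.choose j := fun j hj => mod_cast Nat.choose_pos hj
  unfold revealProb
  rw [div_le_div_iff₀ (hpos _ (by omega)) (hpos _ (by omega)),
    ← Nat.cast_sub (by omega : r ≤ k)]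
  simp only [Nat.add_sub_cancel]
  rw [mul_assoc, mul_assoc]
  exact_mod_cast Nat.mul_le_mul_left (k - r) hcross

lemma revealProb_one_le {k r d : ℕ} (hrk : r + 2 ≤ k) (hd : 1 ≤ d)
    (h : d * (k - r) ≤ k + 1) :
    revealProb k 1 r ≤ revealProb k d r := by
  induction d, hd using Nat.le_induction with
  | base => exact le_rfl
  | succ n hn ih =>
    have hn' : n * (k - r) ≤ k + 1 := le_trans (Nat.mul_le_mul_right _ n.le_succ) h
    exact (ih hn').trans (revealProb_le_revealProb_succ hn hrk h)

lemma optDeg_eq_div {k r : ℕ} (hrk : r ≤ k) : optDeg k r = (k + 1) / (k - r) := by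
  rw [optDeg, ← Nat.cast_sub hrk, ← Nat.cast_succ, Nat.floor_div_natCast, Nat.floor_natCast]

/-- For `k ≥ 2` and `0 ≤ r ≤ k-2`, the revealing probability at the optimal degree
`d(r) = ⌊(k+1)/(k-r)⌋` satisfies `p(d(r), r) ≥ (k-r)/k`. -/
theorem revealing_probability_at_optimal_degree_ge_degree_one
    (k r : ℕ) (hk : 2 ≤ k) (hr : r ≤ k - 2) :
    ((k : ℚ) - r) / k ≤ revealProb k (optDeg k r) r := by
  have hrk : r + 2 ≤ k := by omega
  rw [← revealProb_one, optDeg_eq_div (by omega)]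
  exact revealProb_one_le hrk ((Nat.one_le_div_iff (by omega)).mpr (by omega))
    (Nat.div_mul_le_self _ _)
end
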